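/- (Foster–Lyapunov drift bound, main content of the proof of Theorem 1.) Suppose Assumption 1 holds with constants C (a positive integer) and δ > 0, and Assumption 2 holds with constant H > 0. Then there exist a real number z > 1 and real constants c > 0 and d ≥ 0 such that, defining V : Ω → ℝ by V(q) = Σ_{j∈I} z^{(q_j−C)_+}, the generator drift ΔV(q) := Σ_{i∈I} [ f_i(q)·(V(q+e_i) − V(q)) + g_i(q)·(V(q−e_i) − V(q)) ] satisfies ΔV(q) ≤ −c·V(q) + d for every q ∈ Ω. (In the paper's proof one may take any z with 1 < z < 1 + δ/H, c = (z−1)r' with r' = z^{−1}(δ − H(z−1)), and d = (z−1)(H + 2Kr'z).) -/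

import Mathlib

/-!
Only the coordinate that jumps changes `V(q) = ∑ j, z ^ (q j - C)₊`. Below the threshold `C` a
coordinate contributes at most `(z - 1)·f_i` to the drift. Above it, it contributes
`z ^ (q_i - C - 1) (z - 1) (f_i z - g_i)`, and for `z = 1 + a` with `H a < δ` the negative drift
gives `f_i z - g_i ≤ f_i - g_i + H a < -(δ - H a)`, which is a fixed negative multiple of
`z ^ (q_i - C)`. Summing over the `2K` coordinates and using `∑ f_i ≤ H` gives the drift bound.
-/

open Finset

lemma drift_coord_le {z r f g : ℝ} {C x : ℕ} (hz : 1 ≤ z) (hr : 0 ≤ r) (hf : 0 ≤ f)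
    (hdrift : C < x → f * z - g ≤ -(r * z)) :
    f * (z ^ (x + 1 - C) - z ^ (x - C)) + g * (z ^ (x - 1 - C) - z ^ (x - C))
      ≤ -((z - 1) * r) * z ^ (x - C) + (z - 1) * (f + r) := by
  rcases le_or_gt x C with hx | hx
  · have hpow : z ^ (x + 1 - C) ≤ z :=
      (pow_le_pow_right₀ hz (by omega)).trans_eq (pow_one z)
    have hf_step : f * (z ^ (x + 1 - C) - 1) ≤ f * (z - 1) :=
      mul_le_mul_of_nonneg_left (by linarith) hf
    rw [Nat.sub_eq_zero_of_le hx, show x - 1 - C = 0 by omega, pow_zero]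
    linarith
  · obtain ⟨k, hk⟩ : ∃ k, x - C = k + 1 := ⟨x - C - 1, by omega⟩
    rw [hk, show x + 1 - C = k + 2 by omega, show x - 1 - C = k by omega]
    have hscale : 0 ≤ z ^ k * (z - 1) := mul_nonneg (pow_nonneg (by linarith) k) (by linarith)
    calc f * (z ^ (k + 2) - z ^ (k + 1)) + g * (z ^ k - z ^ (k + 1))
        = z ^ k * (z - 1) * (f * z - g) := by ring
      _ ≤ z ^ k * (z - 1) * (-(r * z)) := mul_le_mul_of_nonneg_left (hdrift hx) hscale
      _ = -((z - 1) * r) * z ^ (k + 1) := by ring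
      _ ≤ -((z - 1) * r) * z ^ (k + 1) + (z - 1) * (f + r) := by
        have : 0 ≤ (z - 1) * (f + r) := mul_nonneg (by linarith) (by linarith)
        linarith

section ExpLyapunov

variable {ι : Type*} [Fintype ι] [DecidableEq ι]

noncomputable def expLyapunov (z : ℝ) (C : ℕ) (q : ι → ℕ) : ℝ := ∑ j, z ^ (q j - C)

lemma sum_comp_update_sub_sum {M : Type*} [AddCommGroup M] (φ : ℕ → M) (q : ι → ℕ)
    (i : ι) (m : ℕ) :
    ∑ j, φ (Function.update q i m j) - ∑ j, φ (q j) = φ m - φ (q i) := by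
  rw [← sum_sub_distrib, Fintype.sum_eq_single i]
  · rw [Function.update_self]
  · intro j hj
    rw [Function.update_of_ne hj, sub_self]

lemma expLyapunov_update_sub (z : ℝ) (C : ℕ) (q : ι → ℕ) (i : ι) (m : ℕ) :
    expLyapunov z C (Function.update q i m) - expLyapunov z C q = z ^ (m - C) - z ^ (q i - C) :=
  sum_comp_update_sub_sum (fun n => z ^ (n - C)) q i m

theorem expLyapunov_drift_le (f g : ι → (ι → ℕ) → ℝ) (hf : ∀ i q, 0 ≤ f i q)
    {z r H : ℝ} {C : ℕ} (hz : 1 ≤ z) (hr : 0 ≤ r) (hH : ∀ q, ∑ i, f i q ≤ H)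
    (hdrift : ∀ i q, C < q i → f i q * z - g i q ≤ -(r * z)) (q : ι → ℕ) :
    ∑ i, (f i q * (expLyapunov z C (Function.update q i (q i + 1)) - expLyapunov z C q)
        + g i q * (expLyapunov z C (Function.update q i (q i - 1)) - expLyapunov z C q))
      ≤ -((z - 1) * r) * expLyapunov z C q + (z - 1) * (H + Fintype.card ι * r) := by
  simp only [expLyapunov_update_sub]
  calc _ ≤ ∑ i, (-((z - 1) * r) * z ^ (q i - C) + (z - 1) * (f i q + r)) :=
        sum_le_sum fun i _ => drift_coord_le hz hr (hf i q) (hdrift i q)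
    _ = -((z - 1) * r) * expLyapunov z C q + (z - 1) * (∑ i, f i q + Fintype.card ι * r) := by
        simp only [sum_add_distrib, ← mul_sum, sum_const, card_univ, nsmul_eq_mul,
          expLyapunov]
    _ ≤ _ := by
        have : 0 ≤ z - 1 := by linarith
        gcongr
        exact hH q

end ExpLyapunov

theorem foster_lyapunov_drift_bound_general
    (K : ℕ)
    (f g : Fin (2 * K) → (Fin (2 * K) → ℕ) → ℝ)
    (hf : ∀ i q, 0 ≤ f i q)
    (C : ℕ) (δ : ℝ) (hδ : 0 < δ)
    (assump1 : ∀ i (q : Fin (2 * K) → ℕ), C < q i → f i q - g i q < -δ)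
    (H : ℝ) (hH : 0 < H)
    (assump2 : ∀ q : Fin (2 * K) → ℕ, ∑ i, f i q ≤ H) :
    ∃ z : ℝ, 1 < z ∧ ∃ c : ℝ, 0 < c ∧ ∃ d : ℝ, 0 ≤ d ∧
      ∀ q : Fin (2 * K) → ℕ,
        ∑ i, (f i q * ((∑ j, z ^ (Function.update q i (q i + 1) j - C))
                        - ∑ j, z ^ (q j - C))
            + g i q * ((∑ j, z ^ (Function.update q i (q i - 1) j - C))
                        - ∑ j, z ^ (q j - C)))
          ≤ -c * (∑ j, z ^ (q j - C)) + d := by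
  obtain ⟨a, ha, hHa⟩ : ∃ a, 0 < a ∧ H * a = δ / 2 :=
    ⟨δ / (2 * H), by positivity, by field_simp⟩
  obtain ⟨r, hr, hrz⟩ : ∃ r, 0 < r ∧ r * (1 + a) = δ / 2 :=
    ⟨δ / (2 * (1 + a)), by positivity, by field_simp⟩
  have hdrift : ∀ i q, C < q i → f i q * (1 + a) - g i q ≤ -(r * (1 + a)) := fun i q hq => by
    have hfH : f i q ≤ H :=
      (single_le_sum (fun j _ => hf j q) (mem_univ i)).trans (assump2 q)
    nlinarith [assump1 i q hq]
  refine ⟨1 + a, by linarith, a * r, by positivity, a * (H + (2 * K : ℕ) * r), by positivity,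
    fun q => ?_⟩
  have hV := expLyapunov_drift_le f g hf (by linarith) hr.le assump2 hdrift q
  simp only [add_sub_cancel_left, Fintype.card_fin] at hV
  exact hV

/-- Foster–Lyapunov drift bound (main content of the proof of Theorem 1).
The index set `I` is identified with `Fin (2*K)`, the state space is
`Ω = ℕ^I`, `q + e_i` and `q − e_i` are realized by `Function.update` (with
truncated subtraction; the corresponding `g`-term vanishes when `q i = 0`
since `g i q = 0` there), and `(q j − C)₊` by truncated subtraction on `ℕ`.
Under Assumption 1 (negative individual drift) and Assumption 2 (bounded
incoming flow) there are `z > 1`, `c > 0`, `d ≥ 0` such that the generator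
drift of `V(q) = ∑ j, z ^ (q j − C)₊` satisfies `ΔV(q) ≤ −c·V(q) + d`. -/
theorem foster_lyapunov_drift_bound
    (K : ℕ) (hK : 0 < K)
    (f g : Fin (2 * K) → (Fin (2 * K) → ℕ) → ℝ)
    (hf : ∀ i q, 0 ≤ f i q) (hg : ∀ i q, 0 ≤ g i q)
    (hg0 : ∀ i q, q i = 0 → g i q = 0)
    (C : ℕ) (hC : 0 < C) (δ : ℝ) (hδ : 0 < δ)
    (assump1 : ∀ i (q : Fin (2 * K) → ℕ), C < q i → f i q - g i q < -δ)
    (H : ℝ) (hH : 0 < H)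
    (assump2 : ∀ q : Fin (2 * K) → ℕ, ∑ i, f i q ≤ H) :
    ∃ z : ℝ, 1 < z ∧ ∃ c : ℝ, 0 < c ∧ ∃ d : ℝ, 0 ≤ d ∧
      ∀ q : Fin (2 * K) → ℕ,
        ∑ i, (f i q * ((∑ j, z ^ (Function.update q i (q i + 1) j - C))
                        - ∑ j, z ^ (q j - C))
            + g i q * ((∑ j, z ^ (Function.update q i (q i - 1) j - C))
                        - ∑ j, z ^ (q j - C)))
          ≤ -c * (∑ j, z ^ (q j - C)) + d :=
  foster_lyapunov_drift_bound_general K f g hf C δ hδ assump1 H hH assump2
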